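/- arXiv:1308.1122 — 5 statements merged into one kernel-verified Lean document; each statement's English description precedes it below -/
import Mathlib

section
/- For any complex n×n matrix A, the trace of exp(A)·exp(A*) is less than or equal to the trace of exp(A + A*). -/
/-!
By the Lie product formula, `exp (A + Aᴴ)` is the limit of `(B * Bᴴ) ^ m` with `B = exp (A / m)`,
while `exp A * exp Aᴴ = B ^ m * Bᴴ ^ m`. For `m = 2 ^ k` the real parts of the traces compare as
`tr (B ^ m * Bᴴ ^ m) ≤ tr ((B * Bᴴ) ^ m)`, by induction on `k` from the Hölder-type bound
`|tr ((X * Y) ^ 2 ^ k)| ^ 2 ≤ tr ((Xᴴ * X) ^ 2 ^ k) * tr ((Y * Yᴴ) ^ 2 ^ k)`. That bound is the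
Cauchy–Schwarz inequality for `⟪X, Y⟫ = tr (Xᴴ * Y)` when `k = 0`; its inductive step applies it
to the pair `(X * Y, X * Y)` and then to `(Xᴴ * X, Y * Yᴴ)`. Both traces in the theorem are real,
being traces of Hermitian matrices, so the inequality of real parts is the whole claim.
-/

open Matrix

open ComplexOrder

open NormedSpace Filter Topology Asymptotics

theorem norm_pow_sub_pow_le {R : Type*} [NormedRing R] [NormOneClass R] {a b : R} {K : ℝ}
    (ha : ‖a‖ ≤ K) (hb : ‖b‖ ≤ K) (m : ℕ) : ‖a ^ m - b ^ m‖ ≤ m * K ^ (m - 1) * ‖a - b‖ := by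
  have hK : 0 ≤ K := (norm_nonneg a).trans ha
  induction m with
  | zero => simp
  | succ m ih =>
    have h_pow : ‖a ^ m‖ ≤ K ^ m := (norm_pow_le a m).trans (pow_le_pow_left₀ (norm_nonneg a) ha m)
    calc ‖a ^ (m + 1) - b ^ (m + 1)‖ = ‖a ^ m * (a - b) + (a ^ m - b ^ m) * b‖ := by
          congr 1; noncomm_ring
      _ ≤ K ^ m * ‖a - b‖ + m * K ^ (m - 1) * ‖a - b‖ * K := by
          grw [norm_add_le, norm_mul_le, norm_mul_le, h_pow, ih, hb]
      _ = (m + 1 : ℕ) * K ^ (m + 1 - 1) * ‖a - b‖ := by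
          rcases m with _ | m
          · simp
          · push_cast; simp only [pow_succ]; ring

section LieProduct

variable {𝔸 : Type*} [NormedRing 𝔸] [NormedAlgebra ℝ 𝔸]

theorem norm_exp_le_exp_norm [NormOneClass 𝔸] (x : 𝔸) : ‖exp x‖ ≤ Real.exp ‖x‖ := by
  rw [exp_eq_tsum ℝ]
  refine tsum_of_norm_bounded (Real.exp_eq_exp_ℝ ▸ expSeries_div_hasSum_exp ‖x‖) fun i => ?_
  rw [norm_smul, norm_inv, Real.norm_natCast, div_eq_inv_mul]
  exact mul_le_mul_of_nonneg_left (norm_pow_le x i) (by positivity)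

variable [CompleteSpace 𝔸]

theorem exp_inv_smul_pow {m : ℕ} (hm : m ≠ 0) (x : 𝔸) : exp ((m : ℝ)⁻¹ • x) ^ m = exp x := by
  let := NormedAlgebra.restrictScalars ℚ ℝ 𝔸
  rw [← NormedSpace.exp_nsmul, ← Nat.cast_smul_eq_nsmul ℝ, smul_smul,
    mul_inv_cancel₀ (Nat.cast_ne_zero.2 hm), one_smul]

theorem isLittleO_exp_smul_mul_exp_smul_sub_exp_smul (X Y : 𝔸) :
    (fun t : ℝ => exp (t • X) * exp (t • Y) - exp (t • (X + Y))) =o[𝓝 0] fun t => t := by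
  have hd : HasDerivAt (fun t : ℝ => exp (t • X) * exp (t • Y) - exp (t • (X + Y))) 0 0 := by
    refine (((hasDerivAt_exp_smul_const X 0).fun_mul (hasDerivAt_exp_smul_const Y 0)).fun_sub
      (hasDerivAt_exp_smul_const (X + Y) (0 : ℝ))).congr_deriv ?_
    simp
  simpa using hasDerivAt_iff_isLittleO_nhds_zero.1 hd

variable [NormOneClass 𝔸]

theorem tendsto_lie_product (X Y : 𝔸) :
    Tendsto (fun m : ℕ => (exp ((m : ℝ)⁻¹ • X) * exp ((m : ℝ)⁻¹ • Y)) ^ m) atTop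
      (𝓝 (exp (X + Y))) := by
  set f : ℝ → 𝔸 := fun t => exp (t • X) * exp (t • Y) - exp (t • (X + Y))
  set r := ‖X‖ + ‖Y‖
  have hf : Tendsto (fun m : ℕ => (m : ℝ) * ‖f (m : ℝ)⁻¹‖) atTop (𝓝 0) := by
    convert (isLittleO_exp_smul_mul_exp_smul_sub_exp_smul X Y).norm_left.tendsto_div_nhds_zero.comp
      tendsto_inv_atTop_nhds_zero_nat using 2 with m
    simp [f, div_eq_mul_inv, mul_comm]
  refine tendsto_iff_norm_sub_tendsto_zero.2 (squeeze_zero' (.of_forall fun _ => norm_nonneg _) ?_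
    (by simpa using hf.const_mul (Real.exp r)))
  filter_upwards [eventually_ne_atTop 0] with m hm
  have norm_exp_inv_smul (Z : 𝔸) : ‖exp ((m : ℝ)⁻¹ • Z)‖ ≤ Real.exp ((m : ℝ)⁻¹ * ‖Z‖) := by
    simpa [norm_smul] using norm_exp_le_exp_norm ((m : ℝ)⁻¹ • Z)
  set K := Real.exp ((m : ℝ)⁻¹ * r)
  have hP : ‖exp ((m : ℝ)⁻¹ • X) * exp ((m : ℝ)⁻¹ • Y)‖ ≤ K := by
    grw [norm_mul_le, norm_exp_inv_smul, norm_exp_inv_smul, ← Real.exp_add, ← mul_add]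
  have hQ : ‖exp ((m : ℝ)⁻¹ • (X + Y))‖ ≤ K := by
    grw [norm_exp_inv_smul, norm_add_le]
  have hK : K ^ (m - 1) ≤ Real.exp r := by
    calc K ^ (m - 1) ≤ K ^ m := pow_le_pow_right₀ (Real.one_le_exp (by positivity)) (m.sub_le 1)
      _ = Real.exp r := by rw [← Real.exp_nat_mul, ← mul_assoc, mul_inv_cancel₀ (by simpa), one_mul]
  rw [← exp_inv_smul_pow hm (X + Y)]
  calc _ ≤ m * K ^ (m - 1) * ‖f (m : ℝ)⁻¹‖ := norm_pow_sub_pow_le hP hQ m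
    _ ≤ m * Real.exp r * ‖f (m : ℝ)⁻¹‖ := by gcongr
    _ = Real.exp r * (m * ‖f (m : ℝ)⁻¹‖) := by ring

end LieProduct

namespace Matrix

variable {m n 𝕜 : Type*} [Fintype m] [Fintype n] [RCLike 𝕜]

open RCLike

theorem norm_trace_conjTranspose_mul_sq_le (X Y : Matrix m n 𝕜) :
    ‖(Xᴴ * Y).trace‖ ^ 2 ≤ re (Xᴴ * X).trace * re (Yᴴ * Y).trace := by
  let v : Matrix m n 𝕜 → PiLp 2 fun _ : m => EuclideanSpace 𝕜 n :=
    fun Z => WithLp.toLp 2 fun i => WithLp.toLp 2 (Z i)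
  have inner_v (Z W : Matrix m n 𝕜) : inner 𝕜 (v Z) (v W) = (Zᴴ * W).trace := by
    simp only [v, PiLp.inner_apply, inner_apply, trace, diag_apply, mul_apply,
      conjTranspose_apply, star_def, mul_comm]
    exact Finset.sum_comm
  rw [← inner_v, ← inner_v, ← inner_v, inner_self_eq_norm_sq, inner_self_eq_norm_sq, ← mul_pow]
  gcongr
  exact norm_inner_le_norm _ _

theorem IsHermitian.im_trace_eq_zero {A : Matrix n n 𝕜} (hA : A.IsHermitian) : im A.trace = 0 :=
  conj_eq_iff_im.1 (by rw [starRingEnd_apply, ← trace_conjTranspose, hA.eq])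

variable [DecidableEq n]

theorem trace_mul_pow_comm {R : Type*} [CommSemiring R] (P Q : Matrix n n R) (j : ℕ) :
    ((P * Q) ^ j).trace = ((Q * P) ^ j).trace := by
  cases j with
  | zero => rfl
  | succ j => rw [pow_succ, ← mul_assoc, mul_pow_mul, trace_mul_comm, ← mul_assoc, ← pow_succ']

theorem norm_trace_mul_pow_two_pow_sq_le (k : ℕ) (X Y : Matrix n n 𝕜) :
    ‖((X * Y) ^ 2 ^ k).trace‖ ^ 2 ≤
      re ((Xᴴ * X) ^ 2 ^ k).trace * re ((Y * Yᴴ) ^ 2 ^ k).trace := by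
  induction k generalizing X Y with
  | zero =>
    rw [pow_zero, pow_one, pow_one, pow_one, trace_mul_comm Xᴴ, trace_mul_comm Y]
    simpa only [conjTranspose_conjTranspose] using norm_trace_conjTranspose_mul_sq_le Xᴴ Y
  | succ k ih =>
    set P := Xᴴ * X
    set Q := Y * Yᴴ
    have hP : Pᴴ = P := by simp [P]
    have hQ : Qᴴ = Q := by simp [Q]
    have h₁ : re (((X * Y)ᴴ * (X * Y)) ^ 2 ^ k).trace = re ((P * Q) ^ 2 ^ k).trace := by
      rw [conjTranspose_mul, mul_assoc, trace_mul_pow_comm]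
      simp only [P, Q, mul_assoc]
    have h₂ : re ((X * Y * (X * Y)ᴴ) ^ 2 ^ k).trace = re ((P * Q) ^ 2 ^ k).trace := by
      rw [conjTranspose_mul, mul_assoc, trace_mul_pow_comm, trace_mul_pow_comm P]
      simp only [P, Q, mul_assoc]
    calc ‖((X * Y) ^ 2 ^ (k + 1)).trace‖ ^ 2
        = ‖((X * Y * (X * Y)) ^ 2 ^ k).trace‖ ^ 2 := by rw [pow_succ' 2 k, pow_mul, sq (X * Y)]
      _ ≤ re (((X * Y)ᴴ * (X * Y)) ^ 2 ^ k).trace * re ((X * Y * (X * Y)ᴴ) ^ 2 ^ k).trace :=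
        ih _ _
      _ = re ((P * Q) ^ 2 ^ k).trace ^ 2 := by rw [h₁, h₂, sq]
      _ ≤ ‖((P * Q) ^ 2 ^ k).trace‖ ^ 2 :=
        sq_le_sq.2 ((abs_re_le_norm _).trans (le_abs_self _))
      _ ≤ re ((Pᴴ * P) ^ 2 ^ k).trace * re ((Q * Qᴴ) ^ 2 ^ k).trace := ih P Q
      _ = re (P ^ 2 ^ (k + 1)).trace * re (Q ^ 2 ^ (k + 1)).trace := by
        rw [hP, hQ, ← sq, ← sq, ← pow_mul, ← pow_mul, ← pow_succ']

theorem re_trace_sq_mul_conjTranspose_sq_pow_le (k : ℕ) (B : Matrix n n 𝕜) :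
    re ((B ^ 2 * (B ^ 2)ᴴ) ^ 2 ^ k).trace ≤ re ((B * Bᴴ) ^ 2 ^ (k + 1)).trace := by
  set a := re ((B * Bᴴ) ^ 2 ^ (k + 1)).trace
  have ha : 0 ≤ a := (nonneg_iff.1 ((posSemidef_self_mul_conjTranspose B).pow _).trace_nonneg).1
  have h_cycle : ((B ^ 2 * (B ^ 2)ᴴ) ^ 2 ^ k).trace = ((B * Bᴴ * (Bᴴ * B)) ^ 2 ^ k).trace := by
    rw [conjTranspose_pow, sq, sq, mul_assoc, trace_mul_pow_comm]
    simp only [mul_assoc]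
  have h_sq : ‖((B * Bᴴ * (Bᴴ * B)) ^ 2 ^ k).trace‖ ^ 2 ≤ a ^ 2 := by
    calc _ ≤ re (((B * Bᴴ)ᴴ * (B * Bᴴ)) ^ 2 ^ k).trace
          * re ((Bᴴ * B * (Bᴴ * B)ᴴ) ^ 2 ^ k).trace := norm_trace_mul_pow_two_pow_sq_le k _ _
      _ = a ^ 2 := by
        simp only [conjTranspose_mul, conjTranspose_conjTranspose, ← sq, ← pow_mul, ← pow_succ',
          trace_mul_pow_comm Bᴴ B, a]
  calc re ((B ^ 2 * (B ^ 2)ᴴ) ^ 2 ^ k).trace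
      ≤ ‖((B * Bᴴ * (Bᴴ * B)) ^ 2 ^ k).trace‖ := h_cycle ▸ re_le_norm _
    _ ≤ a := le_of_pow_le_pow_left₀ two_ne_zero ha h_sq

theorem re_trace_pow_mul_conjTranspose_pow_le (k : ℕ) (B : Matrix n n 𝕜) :
    re (B ^ 2 ^ k * Bᴴ ^ 2 ^ k).trace ≤ re ((B * Bᴴ) ^ 2 ^ k).trace := by
  induction k generalizing B with
  | zero => simp
  | succ k ih =>
    calc re (B ^ 2 ^ (k + 1) * Bᴴ ^ 2 ^ (k + 1)).trace
        = re ((B ^ 2) ^ 2 ^ k * (B ^ 2)ᴴ ^ 2 ^ k).trace := by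
          rw [conjTranspose_pow, pow_succ' 2 k, pow_mul, pow_mul]
      _ ≤ re ((B ^ 2 * (B ^ 2)ᴴ) ^ 2 ^ k).trace := ih _
      _ ≤ re ((B * Bᴴ) ^ 2 ^ (k + 1)).trace := re_trace_sq_mul_conjTranspose_sq_pow_le k B

section LinftyOpNorm

attribute [local instance] Matrix.linftyOpNormedRing Matrix.linftyOpNormedAlgebra

theorem tendsto_lie_product (X Y : Matrix n n 𝕜) :
    Tendsto (fun m : ℕ => (exp ((m : ℝ)⁻¹ • X) * exp ((m : ℝ)⁻¹ • Y)) ^ m) atTop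
      (𝓝 (exp (X + Y))) := by
  -- `‖1‖ = 1` needs `n` nonempty; for empty `n` the matrices form a subsingleton.
  rcases isEmpty_or_nonempty n with _ | _
  · exact tendsto_const_nhds.congr fun _ => Subsingleton.elim _ _
  · exact _root_.tendsto_lie_product X Y

theorem re_trace_exp_mul_exp_conjTranspose_le (A : Matrix n n 𝕜) :
    re (exp A * exp Aᴴ).trace ≤ re (exp (A + Aᴴ)).trace := by
  have h_lim := (((continuous_re.comp continuous_id.matrix_trace).tendsto _).comp
    (tendsto_lie_product A Aᴴ)).comp (tendsto_pow_atTop_atTop_of_one_lt one_lt_two)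
  refine ge_of_tendsto h_lim (.of_forall fun k => ?_)
  set B := exp (((2 ^ k : ℕ) : ℝ)⁻¹ • A)
  have hB : B ^ 2 ^ k = exp A := exp_inv_smul_pow (pow_ne_zero k two_ne_zero) A
  have hB_star : Bᴴ = exp (((2 ^ k : ℕ) : ℝ)⁻¹ • Aᴴ) := by
    rw [← exp_conjTranspose, conjTranspose_smul, star_trivial]
  calc re (exp A * exp Aᴴ).trace = re (B ^ 2 ^ k * Bᴴ ^ 2 ^ k).trace := by
        rw [← conjTranspose_pow, hB, exp_conjTranspose]
    _ ≤ re ((B * Bᴴ) ^ 2 ^ k).trace := re_trace_pow_mul_conjTranspose_pow_le k B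
    _ = _ := by rw [hB_star]; rfl

end LinftyOpNorm

end Matrix

/-- Bernstein's trace inequality: `tr(exp(A) exp(A*)) ≤ tr(exp(A + A*))`. -/
theorem trace_exp_mul_exp_conjTranspose_le (n : ℕ) (A : Matrix (Fin n) (Fin n) ℂ) :
    (NormedSpace.exp A * NormedSpace.exp Aᴴ).trace ≤
      (NormedSpace.exp (A + Aᴴ)).trace := by
  have h_herm : (exp A * exp Aᴴ).IsHermitian := by
    rw [exp_conjTranspose]; exact isHermitian_mul_conjTranspose_self _
  have h_herm' : (exp (A + Aᴴ)).IsHermitian := (isHermitian_add_transpose_self A).exp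
  exact RCLike.le_iff_re_im.2 ⟨re_trace_exp_mul_exp_conjTranspose_le A,
    by rw [h_herm.im_trace_eq_zero, h_herm'.im_trace_eq_zero]⟩
end

section
/- For any complex n×n matrix A, the largest eigenvalue of exp(A)·exp(A*) is less than or equal to the largest eigenvalue of exp(A + A*). -/
/-!
Let `μ` be the largest eigenvalue of the Hermitian matrix `H = A + Aᴴ`. The largest eigenvalue of
`exp A * exp Aᴴ` is the maximum of `‖exp Aᴴ v‖²` over unit vectors `v`. Along `t ↦ exp (t • Aᴴ) v`
the derivative of the squared norm is the quadratic form of `H`, which is at most `μ` times the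
squared norm, so Grönwall's inequality gives `‖exp Aᴴ v‖² ≤ exp μ`. Finally `exp μ` is an
eigenvalue of `exp H` by the spectral mapping theorem.
-/

open Matrix NormedSpace

namespace Matrix

theorem star_mulVec_dotProduct_mulVec_mulVec {α m : Type*} [CommSemiring α] [StarRing α]
    [Fintype m] (C M : Matrix m m α) (v : m → α) :
    star (C *ᵥ v) ⬝ᵥ M *ᵥ C *ᵥ v = star v ⬝ᵥ (Cᴴ * M * C) *ᵥ v := by
  simp only [← mulVec_mulVec, dotProduct_mulVec, star_mulVec, vecMul_vecMul]

theorem star_mulVec_dotProduct_mulVec {α m : Type*} [CommSemiring α] [StarRing α]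
    [Fintype m] [DecidableEq m] (C : Matrix m m α) (v : m → α) :
    star (C *ᵥ v) ⬝ᵥ C *ᵥ v = star v ⬝ᵥ (Cᴴ * C) *ᵥ v := by
  simpa using star_mulVec_dotProduct_mulVec_mulVec C 1 v

variable {𝕜 : Type*} [RCLike 𝕜] {m : Type*} [Fintype m] [DecidableEq m]

namespace IsHermitian

open scoped MatrixOrder ComplexOrder in
theorem re_star_dotProduct_mulVec_le_iSup_eigenvalues {A : Matrix m m 𝕜} (hA : A.IsHermitian)
    (x : m → 𝕜) :
    RCLike.re (star x ⬝ᵥ A *ᵥ x) ≤ (⨆ i, hA.eigenvalues i) * RCLike.re (star x ⬝ᵥ x) := by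
  have hle : A ≤ algebraMap ℝ (Matrix m m 𝕜) (⨆ i, hA.eigenvalues i) := by
    refine le_algebraMap_of_spectrum_le ?_ hA.isSelfAdjoint
    rw [hA.spectrum_real_eq_range_eigenvalues]
    rintro _ ⟨i, rfl⟩
    exact le_ciSup (Set.finite_range _).bddAbove i
  simpa [Algebra.algebraMap_eq_smul_one, sub_mulVec, smul_mulVec, dotProduct_sub,
    RCLike.smul_re] using (Matrix.le_iff.mp hle).re_dotProduct_nonneg x

theorem iSup_eigenvalues_le_of_re_star_dotProduct_mulVec_le [Nonempty m] {M : Matrix m m 𝕜}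
    (hM : M.IsHermitian) {c : ℝ}
    (h : ∀ x, RCLike.re (star x ⬝ᵥ M *ᵥ x) ≤ c * RCLike.re (star x ⬝ᵥ x)) :
    ⨆ i, hM.eigenvalues i ≤ c := by
  refine ciSup_le fun i => ?_
  have hunit : RCLike.re (star ⇑(hM.eigenvectorBasis i) ⬝ᵥ ⇑(hM.eigenvectorBasis i)) = 1 := by
    rw [dotProduct_comm, ← EuclideanSpace.inner_eq_star_dotProduct, inner_self_eq_norm_sq_to_K,
      hM.eigenvectorBasis.orthonormal.1 i]
    simp
  simpa [hunit, ← hM.eigenvalues_eq] using h (hM.eigenvectorBasis i)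

end IsHermitian

section Exponential

-- `exp` is defined from the topology alone, so any normed algebra structure on matrices will do.
attribute [local instance] Matrix.linftyOpNormedRing Matrix.linftyOpNormedAlgebra

theorem IsHermitian.exp_iSup_eigenvalues_le [Nonempty m] {A : Matrix m m 𝕜} (hA : A.IsHermitian)
    (hexpA : (NormedSpace.exp A).IsHermitian) :
    Real.exp (⨆ i, hA.eigenvalues i) ≤ ⨆ i, hexpA.eigenvalues i := by
  obtain ⟨i, hi⟩ := exists_eq_ciSup_of_finite (f := hA.eigenvalues)
  have hmem : Real.exp (⨆ i, hA.eigenvalues i) ∈ spectrum ℝ (NormedSpace.exp A) := by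
    rw [Real.exp_eq_exp_ℝ, ← hi]
    exact spectrum.exp_mem_exp A (hA.eigenvalues_mem_spectrum_real i)
  rw [hexpA.spectrum_real_eq_range_eigenvalues] at hmem
  obtain ⟨j, hj⟩ := hmem
  exact hj ▸ le_ciSup (Set.finite_range _).bddAbove j

theorem hasDerivAt_re_star_exp_smul_mulVec_dotProduct (B : Matrix m m 𝕜) (v : m → 𝕜) (t : ℝ) :
    HasDerivAt (fun s : ℝ => RCLike.re (star (exp (s • B) *ᵥ v) ⬝ᵥ exp (s • B) *ᵥ v))
      (RCLike.re (star (exp (t • B) *ᵥ v) ⬝ᵥ (Bᴴ + B) *ᵥ exp (t • B) *ᵥ v)) t := by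
  let q : Matrix m m 𝕜 →ₗ[ℝ] ℝ :=
    { toFun := fun M => RCLike.re (star v ⬝ᵥ M *ᵥ v)
      map_add' := fun M N => by simp [add_mulVec]
      map_smul' := fun r M => by simp [smul_mulVec, RCLike.smul_re] }
  have hP : HasDerivAt (fun s : ℝ => exp (s • Bᴴ) * exp (s • B))
      (exp (t • Bᴴ) * (Bᴴ + B) * exp (t • B)) t :=
    ((hasDerivAt_exp_smul_const Bᴴ t).mul (hasDerivAt_exp_smul_const' B t)).congr_deriv
      (by noncomm_ring)
  refine ((q.toContinuousLinearMap.hasFDerivAt.comp_hasDerivAt t hP).congr_of_eventuallyEq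
    (.of_forall fun s => ?_)).congr_deriv ?_
  · simp [q, star_mulVec_dotProduct_mulVec, ← exp_conjTranspose]
  · rw [star_mulVec_dotProduct_mulVec_mulVec, ← exp_conjTranspose, conjTranspose_smul,
      star_trivial t]
    rfl

theorem re_star_exp_mulVec_dotProduct_le (B : Matrix m m 𝕜) {μ : ℝ}
    (hB : ∀ u, RCLike.re (star u ⬝ᵥ (Bᴴ + B) *ᵥ u) ≤ μ * RCLike.re (star u ⬝ᵥ u)) (v : m → 𝕜) :
    RCLike.re (star (exp B *ᵥ v) ⬝ᵥ exp B *ᵥ v) ≤ Real.exp μ * RCLike.re (star v ⬝ᵥ v) := by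
  have hf := hasDerivAt_re_star_exp_smul_mulVec_dotProduct B v
  have hgronwall := le_gronwallBound_of_liminf_deriv_right_le (a := 0) (b := 1)
    (δ := RCLike.re (star v ⬝ᵥ v)) (K := μ) (ε := 0)
    (fun t _ => (hf t).continuousAt.continuousWithinAt)
    (fun t _ r hr => (hf t).hasDerivWithinAt.liminf_right_slope_le hr)
    (by simp) (fun t _ => (add_zero (μ * _)).symm ▸ hB _) 1 (by simp)
  simpa [gronwallBound_ε0, mul_comm] using hgronwall

end Exponential

end Matrix

/-- Cohen's inequality, case `i = k = 1`: the largest eigenvalue of `exp(A) exp(A*)`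
is at most the largest eigenvalue of `exp(A + A*)`. -/
theorem max_eigenvalue_exp_mul_exp_conjTranspose_le (n : ℕ) (A : Matrix (Fin n) (Fin n) ℂ)
    (h1 : (NormedSpace.exp A * NormedSpace.exp Aᴴ).IsHermitian)
    (h2 : (NormedSpace.exp (A + Aᴴ)).IsHermitian) :
    (⨆ i, h1.eigenvalues i) ≤ ⨆ i, h2.eigenvalues i := by
  cases isEmpty_or_nonempty (Fin n)
  · simp
  have hH := isHermitian_add_transpose_self A
  have hquad (u : Fin n → ℂ) :
      RCLike.re (star u ⬝ᵥ (Aᴴᴴ + Aᴴ) *ᵥ u) ≤ (⨆ i, hH.eigenvalues i) * RCLike.re (star u ⬝ᵥ u) := by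
    simpa [add_comm] using hH.re_star_dotProduct_mulVec_le_iSup_eigenvalues u
  calc ⨆ i, h1.eigenvalues i ≤ Real.exp (⨆ i, hH.eigenvalues i) :=
        h1.iSup_eigenvalues_le_of_re_star_dotProduct_mulVec_le fun v => by
          simpa [star_mulVec_dotProduct_mulVec, ← exp_conjTranspose] using
            re_star_exp_mulVec_dotProduct_le Aᴴ hquad v
    _ ≤ ⨆ i, h2.eigenvalues i := hH.exp_iSup_eigenvalues_le h2
end

section
/- If x, y ∈ ℝⁿ with x majorized by y and f : ℝ → ℝ is convex, then the vector (f(x₁),...,f(xₙ)) is weakly majorized by (f(y₁),...,f(yₙ)). -/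
/-!
For any threshold `c`, the sum of the `k` largest entries of `v` is at most
`k * c + ∑ i, (v i - c)⁺`, with equality when `c` separates the `k` largest entries from the
others. Choosing such a `c` for `f ∘ y` reduces the theorem to Karamata's inequality
`∑ g (x i) ≤ ∑ g (y i)` for the convex function `g t = (f t - c)⁺`.

Karamata's inequality: rearrange `y` so that it is ordered like `x`, and bound
`g (y i) - g (x i)` below by `g'₊ (x i) * (y i - x i)`, where `g'₊` is the (monotone) right
derivative. Each superlevel set of `g'₊ ∘ x` is a set of largest entries of both `x` and the
rearranged `y`, so `y - x` has nonnegative sum over it, and its total sum is `0`; summing by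
parts along these superlevel sets gives `∑ i, g'₊ (x i) * (y i - x i) ≥ 0`.
-/

/-- The sum of the `k` largest entries of the vector `v`, i.e. the maximum of
`∑ i ∈ s, v i` over all subsets `s` of cardinality `k`. -/
noncomputable def ksum {n : ℕ} (v : Fin n → ℝ) (k : ℕ) : ℝ :=
  sSup {t : ℝ | ∃ s : Finset (Fin n), s.card = k ∧ t = ∑ i ∈ s, v i}

open Finset Set

section TopSets

variable {ι α : Type*} [Fintype ι] [LinearOrder α]

def IsTopSet (v : ι → α) (s : Finset ι) : Prop :=
  ∀ i ∈ s, ∀ j ∉ s, v j ≤ v i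

theorem exists_isTopSet_card_eq [DecidableEq ι] (v : ι → α) {k : ℕ}
    (hk : k ≤ Fintype.card ι) : ∃ s : Finset ι, #s = k ∧ IsTopSet v s := by
  induction k with
  | zero => exact ⟨∅, rfl, by simp [IsTopSet]⟩
  | succ k ih =>
    obtain ⟨s, hcard, hs⟩ := ih (by omega)
    have hne : sᶜ.Nonempty := by
      rw [← card_pos, card_compl]; omega
    obtain ⟨j₀, hj₀, hj₀max⟩ := exists_max_image sᶜ v hne
    refine ⟨insert j₀ s, by rw [card_insert_of_notMem (mem_compl.mp hj₀), hcard], ?_⟩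
    intro i hi j hj
    have hjs : j ∉ s := fun h => hj (mem_insert_of_mem h)
    rcases mem_insert.mp hi with rfl | hi
    · exact hj₀max j (mem_compl.mpr hjs)
    · exact hs i hi j hjs

theorem IsTopSet.exists_threshold [Nonempty α] {v : ι → α} {s : Finset ι}
    (hs : IsTopSet v s) : ∃ c, (∀ i ∈ s, c ≤ v i) ∧ ∀ j ∉ s, v j ≤ c := by
  rcases s.eq_empty_or_nonempty with rfl | hne
  · obtain ⟨c, hc⟩ := Finite.bddAbove_range v
    exact ⟨c, by simp, fun j _ => hc (mem_range_self j)⟩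
  · obtain ⟨i₀, hi₀, hmin⟩ := exists_min_image s v hne
    exact ⟨v i₀, hmin, fun j hj => hs i₀ hi₀ j hj⟩

theorem Finset.sum_posPart_sub_eq_of_threshold [DecidableEq ι] {v : ι → ℝ} {s : Finset ι}
    {c : ℝ} (hs : ∀ i ∈ s, c ≤ v i) (hsc : ∀ j ∉ s, v j ≤ c) :
    ∑ i, (v i - c)⁺ = ∑ i ∈ s, v i - #s * c := by
  rw [← sum_add_sum_compl s,
    sum_congr rfl fun i hi => posPart_eq_self.mpr (sub_nonneg.mpr (hs i hi)),
    sum_eq_zero fun j hj => posPart_eq_zero.mpr (sub_nonpos.mpr (hsc j (mem_compl.mp hj)))]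
  simp [sum_sub_distrib]

end TopSets

section Ksum

variable {n : ℕ} (v : Fin n → ℝ) (k : ℕ)

theorem bddAbove_ksum_set :
    BddAbove {t : ℝ | ∃ s : Finset (Fin n), #s = k ∧ t = ∑ i ∈ s, v i} :=
  ((Set.finite_univ.image fun s : Finset (Fin n) => ∑ i ∈ s, v i).subset
    (by rintro t ⟨s, -, rfl⟩; exact ⟨s, trivial, rfl⟩)).bddAbove

theorem sum_le_ksum {s : Finset (Fin n)} (hs : #s = k) : ∑ i ∈ s, v i ≤ ksum v k :=
  le_csSup (bddAbove_ksum_set v k) ⟨s, hs, rfl⟩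

variable {v k}

theorem ksum_le (hk : k ≤ n) {B : ℝ}
    (hB : ∀ s : Finset (Fin n), #s = k → ∑ i ∈ s, v i ≤ B) : ksum v k ≤ B := by
  obtain ⟨s, -, hs⟩ := exists_subset_card_eq (s := (univ : Finset (Fin n))) (by simpa using hk)
  exact csSup_le ⟨_, s, hs, rfl⟩ (by rintro t ⟨s, hs, rfl⟩; exact hB s hs)

theorem ksum_eq_zero_of_lt (hk : n < k) : ksum v k = 0 := by
  have : {t : ℝ | ∃ s : Finset (Fin n), #s = k ∧ t = ∑ i ∈ s, v i} = ∅ := by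
    refine Set.eq_empty_of_forall_notMem ?_
    rintro t ⟨s, hs, -⟩
    have := card_le_univ s
    simp only [Fintype.card_fin] at this
    omega
  rw [ksum, this, Real.sSup_empty]

theorem ksum_comp_perm (σ : Equiv.Perm (Fin n)) : ksum (v ∘ σ) k = ksum v k := by
  unfold ksum
  congr 1
  ext t
  constructor
  · rintro ⟨s, hs, rfl⟩
    exact ⟨s.map σ.toEmbedding, by simp [hs], by simp [sum_map]⟩
  · rintro ⟨s, hs, rfl⟩
    exact ⟨s.map σ.symm.toEmbedding, by simp [hs], by simp [sum_map]⟩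

theorem ksum_le_mul_add_sum_posPart (hk : k ≤ n) (c : ℝ) :
    ksum v k ≤ k * c + ∑ i, (v i - c)⁺ := by
  refine ksum_le hk fun s hs => ?_
  calc ∑ i ∈ s, v i = k * c + ∑ i ∈ s, (v i - c) := by simp [sum_sub_distrib, hs]
    _ ≤ k * c + ∑ i ∈ s, (v i - c)⁺ := by gcongr with i; exact le_posPart _
    _ ≤ k * c + ∑ i, (v i - c)⁺ := by gcongr; exact subset_univ s

theorem IsTopSet.ksum_card_eq_sum {s : Finset (Fin n)} (hs : IsTopSet v s) :
    ksum v #s = ∑ i ∈ s, v i := by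
  obtain ⟨c, hc, hcs⟩ := hs.exists_threshold
  refine le_antisymm ?_ (sum_le_ksum v _ rfl)
  calc ksum v #s ≤ #s * c + ∑ i, (v i - c)⁺ :=
        ksum_le_mul_add_sum_posPart (by simpa using card_le_univ s) c
    _ = ∑ i ∈ s, v i := by rw [sum_posPart_sub_eq_of_threshold hc hcs]; ring

end Ksum

theorem Finset.sum_sub_mul_nonneg_of_sum_superlevel_nonneg {ι : Type*} [DecidableEq ι]
    (s : Finset ι) (c d : ι → ℝ) (m : ℝ) (hm : ∀ i ∈ s, m ≤ c i)
    (hd : ∀ t, m < t → 0 ≤ ∑ i ∈ s with t ≤ c i, d i) :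
    0 ≤ ∑ i ∈ s, (c i - m) * d i := by
  induction s using induction_on_min_value c generalizing m with
  | empty => simp
  | insert a s has hmin ih =>
    have hsplit : ∑ i ∈ insert a s, (c i - m) * d i
        = (c a - m) * ∑ i ∈ insert a s, d i + ∑ i ∈ s, (c i - c a) * d i := by
      rw [mul_sum, sum_insert has, sum_insert has, add_assoc, ← sum_add_distrib]
      congr 1
      exact sum_congr rfl fun i _ => by ring
    have hlow : 0 ≤ (c a - m) * ∑ i ∈ insert a s, d i := by
      rcases (hm a (mem_insert_self a s)).eq_or_lt with hma | hma
      · simp [← hma]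
      · have := hd (c a) hma
        rw [filter_true_of_mem fun i hi => ?_] at this
        · exact mul_nonneg (sub_nonneg.mpr hma.le) this
        · rcases mem_insert.mp hi with rfl | hi
          exacts [le_rfl, hmin i hi]
    have hhigh : 0 ≤ ∑ i ∈ s, (c i - c a) * d i := by
      refine ih (c a) hmin fun t ht => ?_
      have := hd t ((hm a (mem_insert_self a s)).trans_lt ht)
      rwa [filter_insert, if_neg (not_le.mpr ht)] at this
    linarith

theorem Finset.sum_mul_nonneg_of_sum_superlevel_nonneg {ι : Type*} [Fintype ι] [DecidableEq ι]
    (c d : ι → ℝ) (hd : ∀ t, 0 ≤ ∑ i with t ≤ c i, d i) (hsum : ∑ i, d i = 0) :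
    0 ≤ ∑ i, c i * d i := by
  obtain ⟨m, hm⟩ := Finite.bddBelow_range c
  have := sum_sub_mul_nonneg_of_sum_superlevel_nonneg univ c d m
    (fun i _ => hm (mem_range_self i)) fun t _ => hd t
  simpa [sub_mul, sum_sub_distrib, ← mul_sum, hsum] using this

theorem Tuple.exists_perm_monovary {n : ℕ} {α β : Type*} [LinearOrder α] [LinearOrder β]
    (x : Fin n → α) (y : Fin n → β) : ∃ π : Equiv.Perm (Fin n), Monovary (y ∘ π) x := by
  refine ⟨(Tuple.sort x).symm.trans (Tuple.sort y), fun i j hij => ?_⟩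
  apply Tuple.monotone_sort y
  by_contra! h
  have := Tuple.monotone_sort x h.le
  simp only [Function.comp_apply, Equiv.apply_symm_apply] at this
  exact this.not_gt hij

theorem ConvexOn.rightDeriv_mul_sub_le {S : Set ℝ} {f : ℝ → ℝ} (hf : ConvexOn ℝ S f)
    {a b : ℝ} (ha : a ∈ interior S) (hb : b ∈ S) :
    derivWithin f (Ioi a) a * (b - a) ≤ f b - f a := by
  rcases lt_trichotomy a b with hab | rfl | hab
  · have := hf.rightDeriv_le_slope_of_mem_interior ha hb hab
    rwa [slope_def_field, le_div_iff₀ (sub_pos.mpr hab)] at this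
  · simp
  · have := (hf.slope_le_leftDeriv_of_mem_interior hb ha hab).trans
      (hf.leftDeriv_le_rightDeriv_of_mem_interior ha)
    rw [slope_def_field, div_le_iff₀ (sub_pos.mpr hab)] at this
    linarith

section Karamata

variable {n : ℕ} {x y : Fin n → ℝ} {g : ℝ → ℝ}

theorem ConvexOn.sum_le_sum_of_monovary_of_ksum_le (hg : ConvexOn ℝ univ g) (hxy : Monovary y x)
    (hmaj : ∀ k, ksum x k ≤ ksum y k) (hsum : ∑ i, x i = ∑ i, y i) :
    ∑ i, g (x i) ≤ ∑ i, g (y i) := by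
  set M := fun a => derivWithin g (Ioi a) a
  have hM : Monotone M := by simpa using hg.monotoneOn_rightDeriv
  have hlevel : ∀ t, 0 ≤ ∑ i with t ≤ M (x i), (y i - x i) := by
    intro t
    have htop : IsTopSet y {i | t ≤ M (x i)} := by
      intro i hi j hj
      simp only [mem_filter, Finset.mem_univ, true_and] at hi hj
      exact hxy (lt_of_not_ge fun hij => hj (hi.trans (hM hij)))
    rw [sum_sub_distrib, sub_nonneg, ← htop.ksum_card_eq_sum]
    exact (sum_le_ksum x _ rfl).trans (hmaj _)
  have hzero : ∑ i, (y i - x i) = 0 := by rw [sum_sub_distrib, hsum, sub_self]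
  have hsub : ∀ i, M (x i) * (y i - x i) ≤ g (y i) - g (x i) := fun i =>
    hg.rightDeriv_mul_sub_le (by simp) (Set.mem_univ _)
  have := (sum_mul_nonneg_of_sum_superlevel_nonneg (M ∘ x) (y - x) hlevel hzero).trans
    (sum_le_sum fun i _ => hsub i)
  rwa [sum_sub_distrib, sub_nonneg] at this

theorem ConvexOn.sum_le_sum_of_ksum_le (hg : ConvexOn ℝ univ g)
    (hmaj : ∀ k, ksum x k ≤ ksum y k) (hsum : ∑ i, x i = ∑ i, y i) :
    ∑ i, g (x i) ≤ ∑ i, g (y i) := by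
  obtain ⟨π, hπ⟩ := Tuple.exists_perm_monovary x y
  calc ∑ i, g (x i) ≤ ∑ i, g (y (π i)) :=
        hg.sum_le_sum_of_monovary_of_ksum_le hπ (fun k => (ksum_comp_perm π).symm ▸ hmaj k)
          (hsum.trans (Equiv.sum_comp π y).symm)
    _ = ∑ i, g (y i) := Equiv.sum_comp π (g ∘ y)

end Karamata

/-- If `x ≺ y` (majorization) and `f` is convex, then `f(x) ≺_w f(y)` (weak majorization). -/
theorem weak_majorization_of_convex (n : ℕ) (x y : Fin n → ℝ) (f : ℝ → ℝ)
    (hmaj : ∀ k : ℕ, ksum x k ≤ ksum y k)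
    (hsum : ∑ i, x i = ∑ i, y i)
    (hf : ConvexOn ℝ Set.univ f) :
    ∀ k : ℕ, ksum (fun i => f (x i)) k ≤ ksum (fun i => f (y i)) k := by
  intro k
  rcases lt_or_ge n k with hk | hk
  · rw [ksum_eq_zero_of_lt hk, ksum_eq_zero_of_lt hk]
  obtain ⟨s, rfl, htop⟩ := exists_isTopSet_card_eq (fun i => f (y i)) (by simpa using hk)
  obtain ⟨c, hc, hcs⟩ := htop.exists_threshold
  have hg : ConvexOn ℝ univ fun t => (f t - c)⁺ :=
    (hf.sub (concaveOn_const c convex_univ)).sup (convexOn_const 0 convex_univ)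
  calc ksum (fun i => f (x i)) #s ≤ #s * c + ∑ i, (f (x i) - c)⁺ :=
        ksum_le_mul_add_sum_posPart hk c
    _ ≤ #s * c + ∑ i, (f (y i) - c)⁺ :=
        add_le_add_right (hg.sum_le_sum_of_ksum_le hmaj hsum) _
    _ = ksum (fun i => f (y i)) #s := by
        rw [sum_posPart_sub_eq_of_threshold hc hcs, htop.ksum_card_eq_sum]; ring
end

section
/- Let x₁ ≥ ... ≥ xₙ > 0 and d₁ ≥ ... ≥ dₙ > 0 satisfy x₁···x_k ≥ d₁···d_k for all k < n and x₁···xₙ = d₁···dₙ. Then for every k, the sum of the k largest values among |log xᵢ| is at least the sum of the k largest values among |log dᵢ|. -/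
/-!
Pass to logarithms: `L = log ∘ d` is decreasing, the prefix sums of `M = log ∘ x` dominate
those of `L`, and the totals agree, so the suffix sums of `L` dominate those of `M`.
A `k`-set `s` splits into the indices where `L ≥ 0` and those where `L < 0`, of sizes `p` and
`q`. Since `L` is decreasing, the first part sums to at most the first `p` values of `L`, and
the second to at least the last `q` values. Hence `∑ i ∈ s, |L i|` is bounded by the first `p`
values of `M` minus its last `q` values, which is at most the sum of `|M|` over those `k` indices.
-/

open Finset

section Exchange

variable {ι M : Type*} [AddCommMonoid M] [LinearOrder M] [IsOrderedAddMonoid M]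

theorem Finset.sum_le_sum_of_card_eq_of_forall_le {A B : Finset ι} {f : ι → M}
    (hcard : #A = #B) (h : ∀ a ∈ A, ∀ b ∈ B, f a ≤ f b) : ∑ i ∈ A, f i ≤ ∑ i ∈ B, f i := by
  rcases A.eq_empty_or_nonempty with rfl | hA
  · rw [card_empty, eq_comm, card_eq_zero] at hcard
    simp [hcard]
  calc ∑ i ∈ A, f i ≤ #A • A.sup' hA f := sum_le_card_nsmul _ _ _ fun a ha => le_sup' f ha
    _ = #B • A.sup' hA f := by rw [hcard]
    _ ≤ ∑ i ∈ B, f i := card_nsmul_le_sum _ _ _ fun b hb => sup'_le hA f fun a ha => h a ha b hb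

theorem Finset.sum_le_sum_of_card_eq_of_forall_sdiff_le [DecidableEq ι] {s t : Finset ι}
    {f : ι → M} (hcard : #s = #t) (h : ∀ a ∈ s \ t, ∀ b ∈ t \ s, f a ≤ f b) :
    ∑ i ∈ s, f i ≤ ∑ i ∈ t, f i := by
  rw [← sum_inter_add_sum_sdiff s t, ← sum_inter_add_sum_sdiff t s, inter_comm]
  exact add_le_add_right (sum_le_sum_of_card_eq_of_forall_le (card_sdiff_comm hcard) h) _

end Exchange

section Segments

variable {n : ℕ}

def initSeg (n p : ℕ) : Finset (Fin n) := {i | (i : ℕ) < p}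

def finalSeg (n q : ℕ) : Finset (Fin n) := (initSeg n (n - q))ᶜ

@[simp]
theorem mem_initSeg {p : ℕ} {i : Fin n} : i ∈ initSeg n p ↔ (i : ℕ) < p := by
  simp [initSeg]

@[simp]
theorem mem_finalSeg {q : ℕ} {i : Fin n} : i ∈ finalSeg n q ↔ n - q ≤ (i : ℕ) := by
  simp [finalSeg]

theorem card_initSeg {p : ℕ} (hp : p ≤ n) : #(initSeg n p) = p := by
  rw [initSeg, Fin.card_filter_val_lt, min_eq_right hp]

theorem card_finalSeg {q : ℕ} (hq : q ≤ n) : #(finalSeg n q) = q := by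
  rw [finalSeg, card_compl, Fintype.card_fin, card_initSeg (Nat.sub_le n q)]
  omega

theorem initSeg_self : initSeg n n = univ := by
  ext i
  simp [i.isLt]

theorem disjoint_initSeg_finalSeg {p q : ℕ} (h : p + q ≤ n) :
    Disjoint (initSeg n p) (finalSeg n q) := by
  rw [finalSeg, disjoint_compl_right_iff]
  intro i
  simp only [mem_initSeg]
  omega

theorem sum_le_sum_initSeg_of_antitone {v : Fin n → ℝ} (hv : Antitone v) (s : Finset (Fin n)) :
    ∑ i ∈ s, v i ≤ ∑ i ∈ initSeg n #s, v i := by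
  refine sum_le_sum_of_card_eq_of_forall_sdiff_le (card_initSeg (card_finset_fin_le s)).symm ?_
  intro a ha b hb
  simp only [mem_sdiff, mem_initSeg] at ha hb
  exact hv (Fin.le_def.2 (by omega))

theorem sum_finalSeg_le_sum_of_antitone {v : Fin n → ℝ} (hv : Antitone v) (s : Finset (Fin n)) :
    ∑ i ∈ finalSeg n #s, v i ≤ ∑ i ∈ s, v i := by
  refine sum_le_sum_of_card_eq_of_forall_sdiff_le (card_finalSeg (card_finset_fin_le s)) ?_
  intro a ha b hb
  simp only [mem_sdiff, mem_finalSeg] at ha hb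
  exact hv (Fin.le_def.2 (by omega))

end Segments

section Majorization

variable {n : ℕ} {L M : Fin n → ℝ}

theorem sum_initSeg_le_of_majorization
    (hpre : ∀ p < n, ∑ i ∈ initSeg n p, L i ≤ ∑ i ∈ initSeg n p, M i)
    (htot : ∑ i, L i = ∑ i, M i) {p : ℕ} (hp : p ≤ n) :
    ∑ i ∈ initSeg n p, L i ≤ ∑ i ∈ initSeg n p, M i := by
  rcases hp.lt_or_eq with hp | rfl
  · exact hpre p hp
  · rw [initSeg_self, htot]

theorem sum_finalSeg_le_of_majorization
    (hpre : ∀ p < n, ∑ i ∈ initSeg n p, L i ≤ ∑ i ∈ initSeg n p, M i)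
    (htot : ∑ i, L i = ∑ i, M i) (q : ℕ) :
    ∑ i ∈ finalSeg n q, M i ≤ ∑ i ∈ finalSeg n q, L i := by
  have hL := sum_add_sum_compl (initSeg n (n - q)) L
  have hM := sum_add_sum_compl (initSeg n (n - q)) M
  have := sum_initSeg_le_of_majorization hpre htot (Nat.sub_le n q)
  rw [finalSeg]
  linarith

theorem exists_sum_abs_le_of_majorization (hL : Antitone L)
    (hpre : ∀ p < n, ∑ i ∈ initSeg n p, L i ≤ ∑ i ∈ initSeg n p, M i)
    (htot : ∑ i, L i = ∑ i, M i) (s : Finset (Fin n)) :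
    ∃ t : Finset (Fin n), #t = #s ∧ ∑ i ∈ s, |L i| ≤ ∑ i ∈ t, |M i| := by
  set sp := s.filter (fun i => 0 ≤ L i)
  set sm := s.filter (fun i => ¬0 ≤ L i)
  have hcard : #sp + #sm = #s := card_filter_add_card_filter_not _
  have hdisj := disjoint_initSeg_finalSeg (n := n) (hcard.trans_le (card_finset_fin_le s))
  refine ⟨initSeg n #sp ∪ finalSeg n #sm, ?_, ?_⟩
  · rw [card_union_of_disjoint hdisj, card_initSeg (card_finset_fin_le sp),
      card_finalSeg (card_finset_fin_le sm), hcard]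
  have hsplit : ∑ i ∈ s, |L i| = ∑ i ∈ sp, L i - ∑ i ∈ sm, L i := by
    rw [← sum_filter_add_sum_filter_not s (fun i => 0 ≤ L i), sub_eq_add_neg, ← sum_neg_distrib]
    exact congrArg₂ (· + ·) (sum_congr rfl fun i hi => abs_of_nonneg (mem_filter.1 hi).2)
      (sum_congr rfl fun i hi => abs_of_neg (not_le.1 (mem_filter.1 hi).2))
  have hpos := (sum_le_sum_initSeg_of_antitone hL sp).trans
    (sum_initSeg_le_of_majorization hpre htot (card_finset_fin_le sp))
  have hneg := (sum_finalSeg_le_of_majorization hpre htot #sm).trans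
    (sum_finalSeg_le_sum_of_antitone hL sm)
  have habs : ∑ i ∈ initSeg n #sp, M i - ∑ i ∈ finalSeg n #sm, M i ≤
      ∑ i ∈ initSeg n #sp, |M i| + ∑ i ∈ finalSeg n #sm, |M i| := by
    rw [sub_eq_add_neg, ← sum_neg_distrib]
    exact add_le_add (sum_le_sum fun i _ => le_abs_self _) (sum_le_sum fun i _ => neg_le_abs _)
  rw [sum_union hdisj]
  linarith

end Majorization

theorem ksum_le_ksum_of_forall_exists {n k : ℕ} {v w : Fin n → ℝ}
    (h : ∀ s : Finset (Fin n), #s = k → ∃ t : Finset (Fin n), #t = k ∧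
      ∑ i ∈ s, v i ≤ ∑ i ∈ t, w i) :
    ksum v k ≤ ksum w k := by
  by_cases hk : ∃ s : Finset (Fin n), #s = k
  · obtain ⟨s₀, hs₀⟩ := hk
    refine csSup_le ⟨_, s₀, hs₀, rfl⟩ ?_
    rintro _ ⟨s, hs, rfl⟩
    obtain ⟨t, ht, hst⟩ := h s hs
    have hbdd : BddAbove {r : ℝ | ∃ t : Finset (Fin n), #t = k ∧ r = ∑ i ∈ t, w i} := by
      refine (Set.finite_range fun t : Finset (Fin n) => ∑ i ∈ t, w i).bddAbove.mono ?_
      rintro _ ⟨t, -, rfl⟩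
      exact ⟨t, rfl⟩
    exact hst.trans (le_csSup hbdd ⟨t, ht, rfl⟩)
  · have hempty (u : Fin n → ℝ) :
        {r : ℝ | ∃ s : Finset (Fin n), #s = k ∧ r = ∑ i ∈ s, u i} = ∅ :=
      Set.eq_empty_of_forall_notMem fun _ ⟨s, hs, _⟩ => hk ⟨s, hs⟩
    rw [ksum, ksum, hempty, hempty]

theorem abs_log_weak_majorization_general (n : ℕ) (x d : Fin n → ℝ)
    (hxpos : ∀ i, 0 < x i) (hdpos : ∀ i, 0 < d i)
    (hddec : ∀ i j : Fin n, i ≤ j → d j ≤ d i)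
    (hprod : ∀ k < n, (∏ i ∈ Finset.univ.filter (fun i : Fin n => (i : ℕ) < k), d i) ≤
        ∏ i ∈ Finset.univ.filter (fun i : Fin n => (i : ℕ) < k), x i)
    (hprodeq : ∏ i, x i = ∏ i, d i) :
    ∀ k : ℕ, ksum (fun i => |Real.log (d i)|) k ≤ ksum (fun i => |Real.log (x i)|) k := by
  have hlog_prod {u : Fin n → ℝ} (hu : ∀ i, 0 < u i) (s : Finset (Fin n)) :
      ∑ i ∈ s, Real.log (u i) = Real.log (∏ i ∈ s, u i) :=
    (Real.log_prod fun i _ => (hu i).ne').symm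
  have hanti : Antitone fun i => Real.log (d i) :=
    fun i j hij => Real.log_le_log (hdpos j) (hddec i j hij)
  have hpre (p : ℕ) (hp : p < n) :
      ∑ i ∈ initSeg n p, Real.log (d i) ≤ ∑ i ∈ initSeg n p, Real.log (x i) := by
    rw [hlog_prod hdpos, hlog_prod hxpos]
    exact Real.log_le_log (prod_pos fun i _ => hdpos i) (hprod p hp)
  have htot : ∑ i, Real.log (d i) = ∑ i, Real.log (x i) := by
    rw [hlog_prod hdpos, hlog_prod hxpos, hprodeq]
  intro k
  refine ksum_le_ksum_of_forall_exists fun s hs => ?_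
  obtain ⟨t, ht, hle⟩ := exists_sum_abs_le_of_majorization hanti hpre htot s
  exact ⟨t, ht.trans hs, hle⟩

/-- Under the log-majorization hypotheses, for every `k` the sum of the `k` largest values
among `|log xᵢ|` is at least the sum of the `k` largest values among `|log dᵢ|`. -/
theorem abs_log_weak_majorization (n : ℕ) (x d : Fin n → ℝ)
    (hxpos : ∀ i, 0 < x i) (hdpos : ∀ i, 0 < d i)
    (hxdec : ∀ i j : Fin n, i ≤ j → x j ≤ x i)
    (hddec : ∀ i j : Fin n, i ≤ j → d j ≤ d i)
    (hprod : ∀ k < n, (∏ i ∈ Finset.univ.filter (fun i : Fin n => (i : ℕ) < k), d i) ≤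
        ∏ i ∈ Finset.univ.filter (fun i : Fin n => (i : ℕ) < k), x i)
    (hprodeq : ∏ i, x i = ∏ i, d i) :
    ∀ k : ℕ, ksum (fun i => |Real.log (d i)|) k ≤ ksum (fun i => |Real.log (x i)|) k :=
  abs_log_weak_majorization_general n x d hxpos hdpos hddec hprod hprodeq
end

section
/- There exists a 2×1 real matrix Z with orthonormal columns factor in its polar decomposition Z = U_p H such that U_p is not the minimizer of ‖Log(Q*Z)‖ over matrices Q ∈ ℂ^{2×1} with Q*Q = 1: specifically, for Z = (1,1)ᵀ, U_p = (1/√2)(1,1)ᵀ, H = √2, one has |log(U_p*Z)| = log√2 > 0 while for V = (1,0)ᵀ, |log(V*Z)| = 0. -/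
open Matrix

lemma Matrix.transpose_mul_apply_fin_two {m n R : Type*} [NonUnitalNonAssocSemiring R]
    (A : Matrix (Fin 2) m R) (B : Matrix (Fin 2) n R) (i : m) (j : n) :
    (Aᵀ * B) i j = A 0 i * B 0 j + A 1 i * B 1 j := by
  simp [mul_apply, Fin.sum_univ_two]

lemma Matrix.eq_one_of_fin_one {R : Type*} [Zero R] [One R] (M : Matrix (Fin 1) (Fin 1) R)
    (h : M 0 0 = 1) : M = 1 := by
  ext i j
  fin_cases i; fin_cases j
  exact h

lemma inv_sqrt_two_mul_self_add_self : (√2)⁻¹ * (√2)⁻¹ + (√2)⁻¹ * (√2)⁻¹ = (1 : ℝ) := by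
  rw [← mul_inv, Real.mul_self_sqrt zero_le_two]
  norm_num

/-- For the rectangular matrix `Z = (1,1)ᵀ` with polar decomposition `Z = U_p H`,
`U_p = (1/√2)(1,1)ᵀ`, `H = √2`, the polar factor `U_p` is not the minimizer of
`|Log(Q*Z)|` over `Q` with orthonormal columns: `|log(U_p* Z)| = log √2 > 0` while for
`V = (1,0)ᵀ` (also with `V*V = 1`) one has `|log(V* Z)| = 0`. -/
theorem polar_factor_not_minimizer_rectangular :
    ∃ Z Up V : Matrix (Fin 2) (Fin 1) ℝ,
      Z = Matrix.of ![![1], ![1]] ∧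
      Up = Matrix.of ![![1 / Real.sqrt 2], ![1 / Real.sqrt 2]] ∧
      V = Matrix.of ![![1], ![0]] ∧
      Upᵀ * Up = 1 ∧ Vᵀ * V = 1 ∧
      Z = Real.sqrt 2 • Up ∧
      |Real.log ((Upᵀ * Z) 0 0)| = Real.log (Real.sqrt 2) ∧
      0 < Real.log (Real.sqrt 2) ∧
      |Real.log ((Vᵀ * Z) 0 0)| = 0 := by
  set Z : Matrix (Fin 2) (Fin 1) ℝ := of ![![1], ![1]]
  set Up : Matrix (Fin 2) (Fin 1) ℝ := of ![![1 / √2], ![1 / √2]]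
  set V : Matrix (Fin 2) (Fin 1) ℝ := of ![![1], ![0]]
  have hUp : Upᵀ * Up = 1 :=
    eq_one_of_fin_one _ <| by
      simpa [transpose_mul_apply_fin_two, Up] using inv_sqrt_two_mul_self_add_self
  have hV : Vᵀ * V = 1 := eq_one_of_fin_one _ (by simp [transpose_mul_apply_fin_two, V])
  have hZ : Z = √2 • Up := by
    ext i j
    fin_cases i <;> fin_cases j <;> simp [Z, Up]
  -- `Upᵀ * Z` is the Hermitian factor `H = √2` of the polar decomposition.
  have hH : Upᵀ * Z = √2 • 1 := by rw [hZ, Matrix.mul_smul, hUp]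
  have hVZ : (Vᵀ * Z) 0 0 = 1 := by simp [transpose_mul_apply_fin_two, V, Z]
  have hlog : 0 < Real.log √2 := Real.log_pos Real.one_lt_sqrt_two
  refine ⟨Z, Up, V, rfl, rfl, rfl, hUp, hV, hZ, ?_, hlog, by simp [hVZ]⟩
  simp [hH, abs_of_pos hlog]
end
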